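/- arXiv:2012.01593 — 3 statements merged into one kernel-verified Lean document; each statement's English description precedes it below -/
import Mathlib

section
/- Let λ > 0 and let (c_k)_{k≥1} be i.i.d. random variables with values in [0,1] whose common distribution is absolutely continuous with density that is bounded and positive almost everywhere on [0,1]. Let l_k = exp(−λk) and q(n) = ⌊log₂(log n)⌋. Then almost surely the gap control assumption A.3 holds: for every ε > 0, for all sufficiently large n, for all i ≠ j with n ≤ i, j ≤ 2^{q(n)+1}n − 1 one has (l_i + l_j)/(2|c_i − c_j|) < ε. -/
open MeasureTheory Filter Set ProbabilityTheory
open scoped ENNReal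

/-- Assumption A.3 (gap control), for a given sequence `q`: for every `ε > 0`,
for all large `n`, for all `i ≠ j` in `A_{n,q(n)} = {n, …, 2^{q(n)+1} n − 1}`,
`(l_i + l_j)/(2|c_i − c_j|) < ε`. -/
def A3 (c : ℕ → ℝ) (l : ℕ → ℝ) (q : ℕ → ℕ) : Prop :=
  ∀ ε : ℝ, 0 < ε → ∀ᶠ n : ℕ in Filter.atTop,
    ∀ i ∈ Finset.Ico n (2 ^ (q n + 1) * n), ∀ j ∈ Finset.Ico n (2 ^ (q n + 1) * n),
      i ≠ j → (l i + l j) / (2 * |c i - c j|) < ε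

/-- If `X, Y` are independent and `Y` has a density bounded by `K` on `[0,1]`
(with respect to Lebesgue measure restricted to `[0,1]`), then
`P(|X - Y| ≤ δ) ≤ 2 K δ`. -/
lemma stmt7_pair_bound {Ω : Type*} [MeasurableSpace Ω] (P : Measure Ω) [IsProbabilityMeasure P]
    (X Y : Ω → ℝ) (hX : Measurable X) (hY : Measurable Y)
    (h : IndepFun X Y P)
    (φ : ℝ → ℝ) (K : ℝ) (hKpos : 0 ≤ K) (hK : ∀ x ∈ Set.Icc (0:ℝ) 1, φ x ≤ K)
    (hlawY : Measure.map Y P =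
      (volume.restrict (Set.Icc (0:ℝ) 1)).withDensity (fun x => ENNReal.ofReal (φ x)))
    (δ : ℝ) :
    P {ω | |X ω - Y ω| ≤ δ} ≤ ENNReal.ofReal (2 * K * δ) := by
  have hS : MeasurableSet {p : ℝ × ℝ | |p.1 - p.2| ≤ δ} :=
    measurableSet_le (measurable_fst.sub measurable_snd).abs measurable_const
  have hmap : P.map (fun ω => (X ω, Y ω)) = (P.map X).prod (P.map Y) :=
    (indepFun_iff_map_prod_eq_prod_map_map hX.aemeasurable hY.aemeasurable).mp h
  have hPs : P {ω | |X ω - Y ω| ≤ δ}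
      = ((P.map X).prod (P.map Y)) {p : ℝ × ℝ | |p.1 - p.2| ≤ δ} := by
    rw [← hmap, Measure.map_apply (hX.prodMk hY) hS]; rfl
  haveI : IsProbabilityMeasure (P.map X) := Measure.isProbabilityMeasure_map hX.aemeasurable
  rw [hPs, Measure.prod_apply hS]
  have key : ∀ x : ℝ, (P.map Y) (Prod.mk x ⁻¹' {p : ℝ × ℝ | |p.1 - p.2| ≤ δ})
      ≤ ENNReal.ofReal (2 * K * δ) := by
    intro x
    have hset : (Prod.mk x ⁻¹' {p : ℝ × ℝ | |p.1 - p.2| ≤ δ}) = Set.Icc (x - δ) (x + δ) := by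
      ext y
      simp only [Set.mem_preimage, Set.mem_setOf_eq, Set.mem_Icc, abs_le]
      constructor <;> rintro ⟨h1, h2⟩ <;> constructor <;> linarith
    rw [hset, hlawY, withDensity_apply _ measurableSet_Icc]
    calc ∫⁻ y in Set.Icc (x-δ) (x+δ), ENNReal.ofReal (φ y) ∂(volume.restrict (Set.Icc 0 1))
        = ∫⁻ y in Set.Icc (x-δ) (x+δ) ∩ Set.Icc 0 1, ENNReal.ofReal (φ y) ∂volume := by
          rw [Measure.restrict_restrict measurableSet_Icc]
      _ ≤ ∫⁻ y in Set.Icc (x-δ) (x+δ) ∩ Set.Icc 0 1, ENNReal.ofReal K ∂volume := by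
          apply setLIntegral_mono measurable_const
          intro y hy
          exact ENNReal.ofReal_le_ofReal (hK y hy.2)
      _ = ENNReal.ofReal K * volume (Set.Icc (x-δ) (x+δ) ∩ Set.Icc 0 1) := by
          rw [setLIntegral_const, mul_comm]
      _ ≤ ENNReal.ofReal K * volume (Set.Icc (x-δ) (x+δ)) :=
          mul_le_mul_right (measure_mono Set.inter_subset_left) _
      _ = ENNReal.ofReal K * ENNReal.ofReal (2*δ) := by
          rw [Real.volume_Icc]; ring_nf
      _ = ENNReal.ofReal (2 * K * δ) := by
          rw [← ENNReal.ofReal_mul hKpos]; ring_nf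
  calc ∫⁻ x, (P.map Y) (Prod.mk x ⁻¹' {p : ℝ × ℝ | |p.1 - p.2| ≤ δ}) ∂(P.map X)
      ≤ ∫⁻ _, ENNReal.ofReal (2 * K * δ) ∂(P.map X) := lintegral_mono key
    _ = ENNReal.ofReal (2 * K * δ) := by simp

/-- `2 ^ ⌊log₂ (log n)⌋ ≤ n` for `n ≥ 1`. -/
lemma stmt7_pow_q_le (n : ℕ) (hn : 1 ≤ n) : (2:ℕ) ^ ⌊Real.logb 2 (Real.log n)⌋₊ ≤ n := by
  set x := Real.logb 2 (Real.log n) with hx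
  by_cases h0 : ⌊x⌋₊ = 0
  · simp [h0, hn]
  · have h1 : (1:ℝ) ≤ x := Nat.floor_pos.mp (Nat.pos_of_ne_zero h0)
    have hlognn : (0:ℝ) ≤ Real.log n := Real.log_natCast_nonneg n
    have hlogpos : (0:ℝ) < Real.log n := by
      rcases eq_or_lt_of_le hlognn with he | hl
      · exfalso
        rw [hx, ← he, Real.logb, Real.log_zero, zero_div] at h1
        linarith
      · exact hl
    have h2 : (2:ℝ) ^ ((⌊x⌋₊ : ℝ)) ≤ (2:ℝ) ^ x :=
      Real.rpow_le_rpow_of_exponent_le one_le_two (Nat.floor_le (by linarith))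
    have h3 : (2:ℝ) ^ x = Real.log n := Real.rpow_logb two_pos (by norm_num) hlogpos
    have h4 : Real.log n ≤ n := Real.log_le_self (by positivity)
    have : ((2:ℕ) ^ ⌊x⌋₊ : ℝ) ≤ (n:ℝ) := by
      push_cast
      calc (2:ℝ) ^ ⌊x⌋₊ = (2:ℝ) ^ ((⌊x⌋₊ : ℝ)) := (Real.rpow_natCast 2 _).symm
        _ ≤ (2:ℝ) ^ x := h2
        _ = Real.log n := h3
        _ ≤ n := h4
    exact_mod_cast this

theorem stmt7
    {Ω : Type*} [MeasurableSpace Ω] (P : Measure Ω) [IsProbabilityMeasure P]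
    (lam : ℝ) (hlam : 0 < lam)
    (c : ℕ → Ω → ℝ) (hval : ∀ k ω, c k ω ∈ Set.Icc (0:ℝ) 1)
    (hmeas : ∀ k, Measurable (c k))
    (hindep : iIndepFun c P)
    (φ : ℝ → ℝ) (hφmeas : Measurable φ)
    (hφbdd : ∃ K : ℝ, ∀ x ∈ Set.Icc (0:ℝ) 1, φ x ≤ K)
    (hφpos : ∀ᵐ x ∂(volume.restrict (Set.Icc (0:ℝ) 1)), 0 < φ x)
    (hlaw : ∀ k, Measure.map (c k) P =
      (volume.restrict (Set.Icc (0:ℝ) 1)).withDensity (fun x => ENNReal.ofReal (φ x)))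
    (l : ℕ → ℝ) (hl : ∀ k, l k = Real.exp (-lam * k))
    (q : ℕ → ℕ) (hq : ∀ n, q n = ⌊Real.logb 2 (Real.log n)⌋₊) :
    ∀ᵐ ω ∂P, A3 (fun k => c k ω) l q := by
  obtain ⟨K₀, hK₀⟩ := hφbdd
  set K : ℝ := max K₀ 1 with hKdef
  have hK : ∀ x ∈ Set.Icc (0:ℝ) 1, φ x ≤ K := fun x hx => (hK₀ x hx).trans (le_max_left _ _)
  have hKpos : (0:ℝ) ≤ K := le_trans zero_le_one (le_max_right _ _)
  -- cardinality bound
  have hcard : ∀ n : ℕ, (Finset.Ico n (2 ^ (q n + 1) * n)).card ≤ 2 * n ^ 2 := by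
    intro n
    rw [Nat.card_Ico]
    rcases Nat.eq_zero_or_pos n with h | h
    · simp [h]
    · have hpq : (2:ℕ) ^ (q n) ≤ n := by
        rw [hq n]; exact stmt7_pow_q_le n h
      calc 2 ^ (q n + 1) * n - n ≤ 2 ^ (q n + 1) * n := Nat.sub_le _ _
        _ = 2 * (2 ^ (q n) * n) := by ring
        _ ≤ 2 * (n * n) := by
            exact Nat.mul_le_mul_left 2 (Nat.mul_le_mul_right n hpq)
        _ = 2 * n ^ 2 := by ring
  -- the bad sets
  set B : ℕ → ℕ → Set Ω := fun m n =>
    {ω | ∃ i ∈ Finset.Ico n (2 ^ (q n + 1) * n), ∃ j ∈ Finset.Ico n (2 ^ (q n + 1) * n),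
      i ≠ j ∧ |c i ω - c j ω| ≤ ((m:ℝ) + 1) * Real.exp (-lam * n)} with hBdef
  have hB : ∀ m : ℕ, ∀ᵐ ω ∂P, ∀ᶠ n in atTop, ω ∉ B m n := by
    intro m
    apply ae_eventually_notMem
    -- bound each P (B m n)
    set g : ℕ → ℝ := fun n =>
      (2 * (n:ℝ)^2) * ((2 * (n:ℝ)^2) * (2 * K * (((m:ℝ) + 1) * Real.exp (-lam * n)))) with hgdef
    have hgnn : ∀ n, 0 ≤ g n := by
      intro n
      have := Real.exp_nonneg (-lam * n)
      positivity
    have hPB : ∀ n : ℕ, P (B m n) ≤ ENNReal.ofReal (g n) := by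
      intro n
      set s : Finset ℕ := Finset.Ico n (2 ^ (q n + 1) * n) with hsdef
      set δ : ℝ := ((m:ℝ) + 1) * Real.exp (-lam * n) with hδdef
      set T : ℕ → ℕ → Set Ω := fun i j => {ω | i ≠ j ∧ |c i ω - c j ω| ≤ δ} with hTdef
      have hTle : ∀ i j, P (T i j) ≤ ENNReal.ofReal (2 * K * δ) := by
        intro i j
        rcases eq_or_ne i j with rfl | hij
        · have : T i i = ∅ := by
            ext ω; simp [hTdef]
          simp [this]
        · have hTe : T i j = {ω | |c i ω - c j ω| ≤ δ} := by
            ext ω; simp [hTdef, hij]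
          rw [hTe]
          exact stmt7_pair_bound P (c i) (c j) (hmeas i) (hmeas j)
            (hindep.indepFun hij) φ K hKpos hK (hlaw j) δ
      have hsub : B m n ⊆ ⋃ i ∈ s, ⋃ j ∈ s, T i j := by
        intro ω hω
        obtain ⟨i, hi, j, hj, hij, hle⟩ := hω
        exact Set.mem_biUnion hi (Set.mem_biUnion hj ⟨hij, hle⟩)
      have hcard' : (s.card : ℝ≥0∞) ≤ ENNReal.ofReal (2 * (n:ℝ)^2) := by
        have h1 : (s.card : ℝ≥0∞) ≤ ((2 * n ^ 2 : ℕ) : ℝ≥0∞) :=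
          Nat.cast_le.mpr (hcard n)
        have h2 : ((2 * n ^ 2 : ℕ) : ℝ≥0∞) = ENNReal.ofReal (2 * (n:ℝ)^2) := by
          rw [← ENNReal.ofReal_natCast]
          congr 1
          push_cast; ring
        rw [← h2]; exact h1
      calc P (B m n) ≤ P (⋃ i ∈ s, ⋃ j ∈ s, T i j) := measure_mono hsub
        _ ≤ ∑ i ∈ s, P (⋃ j ∈ s, T i j) := measure_biUnion_finset_le s _
        _ ≤ ∑ i ∈ s, ∑ j ∈ s, P (T i j) :=
            Finset.sum_le_sum fun i _ => measure_biUnion_finset_le s _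
        _ ≤ ∑ _i ∈ s, ∑ _j ∈ s, ENNReal.ofReal (2 * K * δ) :=
            Finset.sum_le_sum fun i _ => Finset.sum_le_sum fun j _ => hTle i j
        _ = (s.card : ℝ≥0∞) * ((s.card : ℝ≥0∞) * ENNReal.ofReal (2 * K * δ)) := by
            simp [Finset.sum_const, nsmul_eq_mul, mul_assoc]
        _ ≤ ENNReal.ofReal (2 * (n:ℝ)^2) *
              (ENNReal.ofReal (2 * (n:ℝ)^2) * ENNReal.ofReal (2 * K * δ)) := by
            gcongr
        _ = ENNReal.ofReal (g n) := by
            rw [← ENNReal.ofReal_mul (by positivity), ← ENNReal.ofReal_mul (by positivity)]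
    -- summability
    have hgsum : Summable g := by
      have h0 : Summable (fun n : ℕ => (n:ℝ) ^ 4 * Real.exp (-lam * n)) :=
        Real.summable_pow_mul_exp_neg_nat_mul 4 hlam
      have h1 : Summable (fun n : ℕ => (8 * K * ((m:ℝ) + 1)) *
          ((n:ℝ) ^ 4 * Real.exp (-lam * n))) := h0.mul_left _
      apply h1.congr
      intro n
      simp only [hgdef]
      ring
    have hsum : (∑' n, P (B m n)) ≤ ENNReal.ofReal (∑' n, g n) := by
      rw [ENNReal.ofReal_tsum_of_nonneg hgnn hgsum]
      exact ENNReal.tsum_le_tsum hPB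
    exact ne_top_of_le_ne_top ENNReal.ofReal_ne_top hsum
  have hB' : ∀ᵐ ω ∂P, ∀ m : ℕ, ∀ᶠ n in atTop, ω ∉ B m n := ae_all_iff.mpr hB
  filter_upwards [hB'] with ω hω
  intro ε hε
  obtain ⟨m, hm⟩ := exists_nat_one_div_lt hε
  filter_upwards [hω m] with n hn
  intro i hi j hj hij
  have hni : n ≤ i := (Finset.mem_Ico.mp hi).1
  have hnj : n ≤ j := (Finset.mem_Ico.mp hj).1
  have habs : ((m:ℝ) + 1) * Real.exp (-lam * n) < |c i ω - c j ω| := by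
    by_contra hc
    push_neg at hc
    exact hn ⟨i, hi, j, hj, hij, hc⟩
  have hepos : (0:ℝ) < Real.exp (-lam * n) := Real.exp_pos _
  have hlsum : l i + l j ≤ 2 * Real.exp (-lam * n) := by
    rw [hl i, hl j]
    have h1 : Real.exp (-lam * i) ≤ Real.exp (-lam * n) := by
      apply Real.exp_le_exp.mpr
      have : (n:ℝ) ≤ i := Nat.cast_le.mpr hni
      nlinarith
    have h2 : Real.exp (-lam * j) ≤ Real.exp (-lam * n) := by
      apply Real.exp_le_exp.mpr
      have : (n:ℝ) ≤ j := Nat.cast_le.mpr hnj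
      nlinarith
    linarith
  have hlpos : 0 < l i + l j := by
    rw [hl i, hl j]
    positivity
  have hdpos : (0:ℝ) < 2 * (((m:ℝ) + 1) * Real.exp (-lam * n)) := by positivity
  calc (l i + l j) / (2 * |c i ω - c j ω|)
      < (l i + l j) / (2 * (((m:ℝ) + 1) * Real.exp (-lam * n))) := by
        apply div_lt_div_of_pos_left hlpos hdpos
        linarith
    _ ≤ (2 * Real.exp (-lam * n)) / (2 * (((m:ℝ) + 1) * Real.exp (-lam * n))) := by
        gcongr
    _ = 1 / ((m:ℝ) + 1) := by
        field_simp
    _ < ε := hm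
end

section
/- Let c_k ∈ (0,1) and l_k > 0 with l_k → 0 satisfy assumptions A.1 (with density φ) and A.3, let I_k be the open interval of length l_k centered at c_k, and let f : ℝ → ℝ be continuous. Then (1/n) Σ_{k=n}^{2n−1} (1/l_k) ∫_{I_k} f(x) dx → ∫₀¹ f(x)φ(x) dx as n → ∞; equivalently, writing μ_{A_n} = (1/n) Σ_{k∈A_n} (1/l_k)·f(x)dx|_{I_k} and V_n = ⋃_{k∈A_n} I_k (the intervals I_k, k ∈ A_n, being pairwise disjoint for large n by A.3), one has μ_{A_n}(V_n) → ∫₀¹ f(x)φ(x) dx. -/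
open MeasureTheory Filter Set
open scoped ENNReal

/-- Assumption A.1 (distribution). -/
def A1 (c : ℕ → ℝ) (φ : ℝ → ℝ) : Prop :=
  ∀ g : ℝ → ℝ, ContinuousOn g (Set.Icc 0 1) →
    Filter.Tendsto (fun n : ℕ => (n : ℝ)⁻¹ * ∑ k ∈ Finset.Ico n (2 * n), g (c k))
      Filter.atTop (nhds (∫ x in Set.Icc (0:ℝ) 1, g x * φ x))

theorem stmt14
    (c : ℕ → ℝ) (hval : ∀ k, c k ∈ Set.Ioo (0:ℝ) 1)
    (l : ℕ → ℝ) (hlpos : ∀ k, 0 < l k)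
    (hl0 : Filter.Tendsto l Filter.atTop (nhds 0))
    (I : ℕ → Set ℝ)
    (hI : ∀ k, I k = Set.Ioo (c k - l k / 2) (c k + l k / 2))
    (φ : ℝ → ℝ) (hφint : IntegrableOn φ (Set.Icc 0 1) volume)
    (hφpos : ∀ᵐ x ∂(volume.restrict (Set.Icc (0:ℝ) 1)), 0 < φ x)
    (hA1 : A1 c φ)
    (q : ℕ → ℕ) (hq : Filter.Tendsto q Filter.atTop Filter.atTop)
    (hA3 : A3 c l q)
    (f : ℝ → ℝ) (hf : Continuous f) :
    Filter.Tendsto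
      (fun n : ℕ => (n : ℝ)⁻¹ * ∑ k ∈ Finset.Ico n (2 * n), (l k)⁻¹ * ∫ x in I k, f x)
      Filter.atTop (nhds (∫ x in Set.Icc (0:ℝ) 1, f x * φ x)) := by
  have hb := hA1 f hf.continuousOn
  have key : Tendsto (fun n : ℕ =>
      (n : ℝ)⁻¹ * ∑ k ∈ Finset.Ico n (2 * n), ((l k)⁻¹ * ∫ x in I k, f x)
        - (n : ℝ)⁻¹ * ∑ k ∈ Finset.Ico n (2 * n), f (c k)) atTop (nhds 0) := by
    rw [NormedAddCommGroup.tendsto_nhds_zero]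
    intro ε hε
    obtain ⟨δ, hδ, hδ'⟩ := Metric.uniformContinuousOn_iff.mp
      ((isCompact_Icc (a := (-1:ℝ)) (b := 2)).uniformContinuousOn_of_continuous
        hf.continuousOn) (ε / 2) (by positivity)
    -- pointwise estimate
    have hpt : ∀ k : ℕ, l k < min δ 1 →
        |(l k)⁻¹ * (∫ x in I k, f x) - f (c k)| ≤ ε / 2 := by
      intro k hk
      have hlk := hlpos k
      have hkδ : l k < δ := lt_of_lt_of_le hk (min_le_left _ _)
      have hk1 : l k < 1 := lt_of_lt_of_le hk (min_le_right _ _)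
      obtain ⟨hc0, hc1⟩ := hval k
      have hvol : volume (I k) = ENNReal.ofReal (l k) := by
        rw [hI k, Real.volume_Ioo]; ring_nf
      have hvolt : (volume (I k)).toReal = l k := by
        rw [hvol, ENNReal.toReal_ofReal hlk.le]
      have hint : IntegrableOn f (I k) volume := by
        rw [hI k]; exact hf.integrableOn_Icc.mono_set Set.Ioo_subset_Icc_self
      have hmem : ∀ x ∈ I k, x ∈ Set.Icc (-1:ℝ) 2 := by
        intro x hx
        rw [hI k] at hx
        obtain ⟨h1, h2⟩ := hx
        constructor <;> [linarith; linarith]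
      have hcmem : c k ∈ Set.Icc (-1:ℝ) 2 := ⟨by linarith, by linarith⟩
      have hbound : ∀ x ∈ I k, ‖f x - f (c k)‖ ≤ ε / 2 := by
        intro x hx
        have hd : dist x (c k) < δ := by
          rw [hI k] at hx
          obtain ⟨h1, h2⟩ := hx
          rw [Real.dist_eq, abs_lt]
          constructor <;> linarith
        exact le_of_lt (hδ' x (hmem x hx) (c k) hcmem hd)
      have hnorm : ‖∫ x in I k, (f x - f (c k))‖ ≤ ε / 2 * (volume (I k)).toReal := by
        apply norm_setIntegral_le_of_norm_le_const
        · rw [hvol]; exact ENNReal.ofReal_lt_top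
        · exact hbound
      have hsplit : (∫ x in I k, (f x - f (c k))) =
          (∫ x in I k, f x) - l k * f (c k) := by
        rw [integral_sub hint (integrableOn_const (by rw [hvol]; exact ENNReal.ofReal_ne_top))]
        rw [setIntegral_const, measureReal_def, hvolt, smul_eq_mul]
      have heq : (l k)⁻¹ * (∫ x in I k, f x) - f (c k) =
          (l k)⁻¹ * (∫ x in I k, (f x - f (c k))) := by
        rw [hsplit]; field_simp
      rw [heq, abs_mul, abs_inv, abs_of_pos hlk]
      rw [hvolt] at hnorm
      calc (l k)⁻¹ * |∫ x in I k, (f x - f (c k))| ≤ (l k)⁻¹ * (ε / 2 * l k) := by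
            exact mul_le_mul_of_nonneg_left hnorm (inv_nonneg.2 hlk.le)
        _ = ε / 2 := by field_simp
    have hE : ∀ᶠ k in atTop, l k < min δ 1 :=
      hl0.eventually (eventually_lt_nhds (lt_min hδ one_pos))
    obtain ⟨N, hN⟩ := eventually_atTop.mp hE
    filter_upwards [eventually_ge_atTop (max N 1)] with n hn
    have hn1 : 1 ≤ n := le_trans (le_max_right N 1) hn
    have hnN : N ≤ n := le_trans (le_max_left N 1) hn
    have hnpos : (0:ℝ) < n := by exact_mod_cast hn1
    have hdiff : (n : ℝ)⁻¹ * ∑ k ∈ Finset.Ico n (2 * n), ((l k)⁻¹ * ∫ x in I k, f x)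
        - (n : ℝ)⁻¹ * ∑ k ∈ Finset.Ico n (2 * n), f (c k)
        = (n : ℝ)⁻¹ * ∑ k ∈ Finset.Ico n (2 * n),
            ((l k)⁻¹ * (∫ x in I k, f x) - f (c k)) := by
      rw [Finset.sum_sub_distrib]; ring
    rw [hdiff]
    have hsum : ‖∑ k ∈ Finset.Ico n (2 * n),
        ((l k)⁻¹ * (∫ x in I k, f x) - f (c k))‖ ≤ (n : ℝ) * (ε / 2) := by
      calc ‖∑ k ∈ Finset.Ico n (2 * n), ((l k)⁻¹ * (∫ x in I k, f x) - f (c k))‖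
          ≤ ∑ k ∈ Finset.Ico n (2 * n), ‖(l k)⁻¹ * (∫ x in I k, f x) - f (c k)‖ :=
            norm_sum_le _ _
        _ ≤ ∑ k ∈ Finset.Ico n (2 * n), (ε / 2) := by
            apply Finset.sum_le_sum
            intro k hk
            have hkn : n ≤ k := (Finset.mem_Ico.mp hk).1
            exact hpt k (hN k (le_trans hnN hkn))
        _ = (n : ℝ) * (ε / 2) := by
            rw [Finset.sum_const, Nat.card_Ico]
            simp [Nat.two_mul]
    calc ‖(n : ℝ)⁻¹ * ∑ k ∈ Finset.Ico n (2 * n),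
          ((l k)⁻¹ * (∫ x in I k, f x) - f (c k))‖
        = (n : ℝ)⁻¹ * ‖∑ k ∈ Finset.Ico n (2 * n),
            ((l k)⁻¹ * (∫ x in I k, f x) - f (c k))‖ := by
          rw [norm_mul, Real.norm_eq_abs, abs_of_pos (inv_pos.2 hnpos)]
      _ ≤ (n : ℝ)⁻¹ * ((n : ℝ) * (ε / 2)) :=
          mul_le_mul_of_nonneg_left hsum (inv_nonneg.2 hnpos.le)
      _ = ε / 2 := by field_simp
      _ < ε := by linarith
  have := key.add hb
  simp only [sub_add_cancel, zero_add] at this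
  exact this
end

section
/- Let f : [0,1] → ℝ be continuous with K = sup_{[0,1]} |f|, let J, J′ ⊆ [0,1] be disjoint intervals with lengths r, r′ > 0 and centers c, c′, and let ε > 0. Define the measures μ = (1/r)·f(x)dx restricted to J and μ′ = (1/r′)·f(x)dx restricted to J′. Assume (r + r′)/(2|c − c′|) ≤ 1 − e^{−ε}, and that |f(x) − f(c)| ≤ ε for all x ∈ J and |f(y) − f(c′)| ≤ ε for all y ∈ J′. Then |I(μ, μ′) − (−log|c − c′|)·f(c)f(c′)| ≤ (2K·((−log|c − c′|) + ε) + K²)·ε. -/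
open MeasureTheory Filter Set
open scoped ENNReal

theorem stmt16
    (f : ℝ → ℝ) (hf : ContinuousOn f (Set.Icc 0 1))
    (K : ℝ) (hK : K = sSup ((fun x => |f x|) '' Set.Icc (0:ℝ) 1))
    (r r' cc cc' ε : ℝ) (hr : 0 < r) (hr' : 0 < r') (hε : 0 < ε)
    (J J' : Set ℝ)
    (hJ : J = Set.Ioo (cc - r / 2) (cc + r / 2))
    (hJ' : J' = Set.Ioo (cc' - r' / 2) (cc' + r' / 2))
    (hJsub : J ⊆ Set.Icc 0 1) (hJ'sub : J' ⊆ Set.Icc 0 1)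
    (hdisj : Disjoint J J')
    (hgap : (r + r') / (2 * |cc - cc'|) ≤ 1 - Real.exp (-ε))
    (hfc : ∀ x ∈ J, |f x - f cc| ≤ ε)
    (hfc' : ∀ y ∈ J', |f y - f cc'| ≤ ε) :
    |(r⁻¹ * r'⁻¹) * (∫ x in J, ∫ y in J', (-Real.log |x - y|) * (f x * f y)) -
        (-Real.log |cc - cc'|) * (f cc * f cc')| ≤
      (2 * K * ((-Real.log |cc - cc'|) + ε) + K ^ 2) * ε := by
  -- notation
  set d : ℝ := |cc - cc'| with hd_def
  set L : ℝ := -Real.log d with hL_def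
  set M : ℝ := (2 * K * (L + ε) + K ^ 2) * ε with hM_def
  set g : ℝ × ℝ → ℝ := fun p => (-Real.log |p.1 - p.2|) * (f p.1 * f p.2) with hg_def
  -- membership of centers
  have hccJ : cc ∈ J := by rw [hJ]; constructor <;> linarith
  have hccJ' : cc' ∈ J' := by rw [hJ']; constructor <;> linarith
  have hccI : cc ∈ Set.Icc (0:ℝ) 1 := hJsub hccJ
  have hccI' : cc' ∈ Set.Icc (0:ℝ) 1 := hJ'sub hccJ'
  have hne : cc ≠ cc' := hdisj.ne_of_mem hccJ hccJ'
  have hd0 : 0 < d := abs_pos.mpr (sub_ne_zero.mpr hne)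
  have hd1 : d ≤ 1 := by
    rw [hd_def, abs_sub_le_iff]
    obtain ⟨h1, h2⟩ := hccI; obtain ⟨h3, h4⟩ := hccI'
    constructor <;> linarith
  have hL0 : 0 ≤ L := by
    rw [hL_def]; simp only [neg_nonneg]; exact Real.log_nonpos hd0.le hd1
  -- K is an upper bound for |f| on [0,1]
  have hKb : ∀ z ∈ Set.Icc (0:ℝ) 1, |f z| ≤ K := by
    intro z hz
    rw [hK]
    exact le_csSup (isCompact_Icc.image_of_continuousOn hf.abs).bddAbove ⟨z, hz, rfl⟩
  have hK0 : 0 ≤ K := le_trans (abs_nonneg (f cc)) (hKb cc hccI)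
  -- the gap inequality
  have hsum : r + r' ≤ (1 - Real.exp (-ε)) * (2 * d) := by
    have h2d : 0 < 2 * d := by linarith
    exact (div_le_iff₀ h2d).mp hgap
  have hexp : Real.exp ε + Real.exp (-ε) ≥ 2 := by
    have := Real.add_one_le_exp ε
    have := Real.add_one_le_exp (-ε)
    linarith
  -- pointwise estimate on J ×ˢ J'
  have hpt : ∀ p ∈ J ×ˢ J', |g p - L * (f cc * f cc')| ≤ M ∧ |g p| ≤ (L + ε) * (K * K) := by
    rintro ⟨x, y⟩ ⟨hx, hy⟩
    have hxI := hJsub hx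
    have hyI := hJ'sub hy
    rw [hJ] at hx; rw [hJ'] at hy
    obtain ⟨hx1, hx2⟩ := hx
    obtain ⟨hy1, hy2⟩ := hy
    set a : ℝ := |x - y| with ha_def
    have htri1 : d ≤ |cc - x| + a + |y - cc'| := by
      calc d ≤ |cc - x| + |x - cc'| := abs_sub_le cc x cc'
        _ ≤ |cc - x| + (|x - y| + |y - cc'|) := by
            have := abs_sub_le x y cc'
            linarith
        _ = |cc - x| + a + |y - cc'| := by ring
    have htri2 : a ≤ |x - cc| + d + |cc' - y| := by
      calc a ≤ |x - cc| + |cc - y| := abs_sub_le x cc y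
        _ ≤ |x - cc| + (|cc - cc'| + |cc' - y|) := by
            have := abs_sub_le cc cc' y
            linarith
        _ = |x - cc| + d + |cc' - y| := by ring
    have hxc : |x - cc| < r / 2 := by rw [abs_lt]; constructor <;> linarith
    have hyc : |y - cc'| < r' / 2 := by rw [abs_lt]; constructor <;> linarith
    have hcx : |cc - x| < r / 2 := by rw [abs_sub_comm]; exact hxc
    have hcy : |cc' - y| < r' / 2 := by rw [abs_sub_comm]; exact hyc
    have halow : d * Real.exp (-ε) ≤ a := by nlinarith
    have haup : a ≤ d * Real.exp ε := by nlinarith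
    have ha0 : 0 < a := lt_of_lt_of_le (by positivity) halow
    have ha1 : a ≤ 1 := by
      rw [ha_def, abs_sub_le_iff]
      obtain ⟨u1, u2⟩ := hxI; obtain ⟨u3, u4⟩ := hyI
      constructor <;> linarith
    -- log bounds
    have hlog1 : Real.log d - ε ≤ Real.log a := by
      have := Real.log_le_log (by positivity) halow
      rwa [Real.log_mul hd0.ne' (Real.exp_ne_zero _), Real.log_exp] at this
    have hlog2 : Real.log a ≤ Real.log d + ε := by
      have := Real.log_le_log ha0 haup
      rwa [Real.log_mul hd0.ne' (Real.exp_ne_zero _), Real.log_exp] at this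
    have hl0 : 0 ≤ -Real.log a := by
      simp only [neg_nonneg]; exact Real.log_nonpos ha0.le ha1
    have hlL : |(-Real.log a) - L| ≤ ε := by
      rw [abs_le, hL_def]; constructor <;> linarith
    have hlup : -Real.log a ≤ L + ε := by
      have := (abs_le.mp hlL).2; linarith
    -- f bounds
    have hfx : |f x| ≤ K := hKb x hxI
    have hfy : |f y| ≤ K := hKb y hyI
    have hfcK : |f cc| ≤ K := hKb cc hccI
    have hfc'K : |f cc'| ≤ K := hKb cc' hccI'
    have hdx : |f x - f cc| ≤ ε := hfc x (by rw [hJ]; exact ⟨hx1, hx2⟩)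
    have hdy : |f y - f cc'| ≤ ε := hfc' y (by rw [hJ']; exact ⟨hy1, hy2⟩)
    have e1 : |f x * f y - f cc * f cc'| ≤ 2 * K * ε := by
      have hdec : f x * f y - f cc * f cc' = f x * (f y - f cc') + (f x - f cc) * f cc' := by
        ring
      rw [hdec]
      refine (abs_add_le _ _).trans ?_
      rw [abs_mul, abs_mul]
      have u1 : |f x| * |f y - f cc'| ≤ K * ε := mul_le_mul hfx hdy (abs_nonneg _) hK0
      have u2 : |f x - f cc| * |f cc'| ≤ ε * K := mul_le_mul hdx hfc'K (abs_nonneg _) hε.le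
      calc |f x| * |f y - f cc'| + |f x - f cc| * |f cc'| ≤ K * ε + ε * K := add_le_add u1 u2
        _ = 2 * K * ε := by ring
    have e2 : |f cc * f cc'| ≤ K * K := by
      rw [abs_mul]; exact mul_le_mul hfcK hfc'K (abs_nonneg _) hK0
    have e3 : |f x * f y| ≤ K * K := by
      rw [abs_mul]; exact mul_le_mul hfx hfy (abs_nonneg _) hK0
    constructor
    · have hdec : g (x, y) - L * (f cc * f cc') =
          (-Real.log a) * (f x * f y - f cc * f cc') + ((-Real.log a) - L) * (f cc * f cc') := by
        simp only [hg_def]; ring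
      rw [hdec]
      refine (abs_add_le _ _).trans ?_
      rw [abs_mul, abs_mul, abs_of_nonneg hl0, hM_def]
      have t1 : (-Real.log a) * |f x * f y - f cc * f cc'| ≤ (L + ε) * (2 * K * ε) :=
        mul_le_mul hlup e1 (abs_nonneg _) (by linarith)
      have t2 : |(-Real.log a) - L| * |f cc * f cc'| ≤ ε * (K * K) :=
        mul_le_mul hlL e2 (abs_nonneg _) hε.le
      calc (-Real.log a) * |f x * f y - f cc * f cc'| + |(-Real.log a) - L| * |f cc * f cc'|
          ≤ (L + ε) * (2 * K * ε) + ε * (K * K) := add_le_add t1 t2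
        _ = (2 * K * (L + ε) + K ^ 2) * ε := by ring
    · simp only [hg_def]
      rw [abs_mul, abs_neg, abs_of_nonpos (Real.log_nonpos ha0.le ha1)]
      exact mul_le_mul hlup e3 (abs_nonneg _) (by linarith)
  -- measure-theoretic setup
  have hJm : MeasurableSet J := by rw [hJ]; exact measurableSet_Ioo
  have hJ'm : MeasurableSet J' := by rw [hJ']; exact measurableSet_Ioo
  have hDm : MeasurableSet (J ×ˢ J') := hJm.prod hJ'm
  have hprodr : (volume.restrict J).prod (volume.restrict J') =
      (volume.prod volume).restrict (J ×ˢ J') := Measure.prod_restrict J J'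
  have hvolJ : volume J = ENNReal.ofReal r := by
    rw [hJ, Real.volume_Ioo]; congr 1; ring
  have hvolJ' : volume J' = ENNReal.ofReal r' := by
    rw [hJ', Real.volume_Ioo]; congr 1; ring
  have hmassE : ((volume.restrict J).prod (volume.restrict J')) Set.univ =
      ENNReal.ofReal r * ENNReal.ofReal r' := by
    rw [← Set.univ_prod_univ, Measure.prod_prod, Measure.restrict_apply_univ,
      Measure.restrict_apply_univ, hvolJ, hvolJ']
  haveI hfin : IsFiniteMeasure ((volume.restrict J).prod (volume.restrict J')) := by
    constructor
    rw [hmassE]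
    exact ENNReal.mul_lt_top ENNReal.ofReal_lt_top ENNReal.ofReal_lt_top
  have hmass : (((volume.restrict J).prod (volume.restrict J')) Set.univ).toReal = r * r' := by
    rw [hmassE, ENNReal.toReal_mul, ENNReal.toReal_ofReal hr.le, ENNReal.toReal_ofReal hr'.le]
  haveI hfin2 : IsFiniteMeasure ((volume.prod volume).restrict (J ×ˢ J')) := by
    rw [← hprodr]; exact hfin
  -- continuity of g on J ×ˢ J'
  have hgcont : ContinuousOn g (J ×ˢ J') := by
    have h1 : ContinuousOn (fun p : ℝ × ℝ => |p.1 - p.2|) (J ×ˢ J') :=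
      ((continuous_fst.sub continuous_snd).abs).continuousOn
    have hne0 : ∀ p ∈ J ×ˢ J', |p.1 - p.2| ≠ 0 := by
      rintro ⟨x, y⟩ ⟨hx, hy⟩
      exact abs_ne_zero.mpr (sub_ne_zero.mpr (hdisj.ne_of_mem hx hy))
    have hlog : ContinuousOn (fun p : ℝ × ℝ => Real.log |p.1 - p.2|) (J ×ˢ J') :=
      h1.log hne0
    have hf1 : ContinuousOn (fun p : ℝ × ℝ => f p.1) (J ×ˢ J') :=
      hf.comp continuous_fst.continuousOn (fun p hp => hJsub hp.1)
    have hf2 : ContinuousOn (fun p : ℝ × ℝ => f p.2) (J ×ˢ J') :=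
      hf.comp continuous_snd.continuousOn (fun p hp => hJ'sub hp.2)
    exact hlog.neg.mul (hf1.mul hf2)
  -- integrability of g
  have hgint : Integrable g ((volume.restrict J).prod (volume.restrict J')) := by
    rw [hprodr]
    refine Integrable.mono' (integrable_const ((L + ε) * (K * K)))
      (hgcont.aestronglyMeasurable hDm) ?_
    · exact ae_restrict_of_forall_mem hDm (fun p hp => (hpt p hp).2)
  -- the integral identity
  have hIter : (∫ x in J, ∫ y in J', (-Real.log |x - y|) * (f x * f y)) =
      ∫ p, g p ∂((volume.restrict J).prod (volume.restrict J')) :=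
    (integral_prod g hgint).symm
  -- the main bound on the product integral
  set I : ℝ := ∫ p, g p ∂((volume.restrict J).prod (volume.restrict J')) with hI_def
  have hhint : Integrable (fun p => g p - L * (f cc * f cc'))
      ((volume.restrict J).prod (volume.restrict J')) :=
    hgint.sub (integrable_const _)
  have hbnd : ∀ᵐ p ∂((volume.restrict J).prod (volume.restrict J')),
      ‖g p - L * (f cc * f cc')‖ ≤ M := by
    rw [hprodr]
    exact ae_restrict_of_forall_mem hDm (fun p hp => (hpt p hp).1)
  have hnorm : ‖∫ p, (g p - L * (f cc * f cc'))
      ∂((volume.restrict J).prod (volume.restrict J'))‖ ≤ M * (r * r') := by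
    have := norm_integral_le_of_norm_le_const hbnd
    rwa [measureReal_def, hmass] at this
  have hsplit : (∫ p, (g p - L * (f cc * f cc'))
      ∂((volume.restrict J).prod (volume.restrict J'))) =
      I - (r * r') * (L * (f cc * f cc')) := by
    rw [integral_sub hgint (integrable_const _), integral_const, measureReal_def, hmass, smul_eq_mul, hI_def]
  have key : |I - (r * r') * (L * (f cc * f cc'))| ≤ M * (r * r') := by
    rw [← hsplit]; exact hnorm
  -- conclude
  rw [hIter]
  have hrr' : (0:ℝ) < r * r' := mul_pos hr hr'
  have heq : (r⁻¹ * r'⁻¹) * I - L * (f cc * f cc') =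
      (r * r')⁻¹ * (I - (r * r') * (L * (f cc * f cc'))) := by
    field_simp
  rw [heq, abs_mul, abs_of_pos (inv_pos.mpr hrr')]
  calc (r * r')⁻¹ * |I - (r * r') * (L * (f cc * f cc'))| ≤ (r * r')⁻¹ * (M * (r * r')) := by
        exact mul_le_mul_of_nonneg_left key (inv_pos.mpr hrr').le
    _ = M := by field_simp
end
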